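/- arXiv:1109.1816 — 7 statements merged into one kernel-verified Lean document; each statement's English description precedes it below -/
import Mathlib

section
/- For every r with 0.34 ≤ r < 1.36, the polynomial P(r) = 1435r⁶ + 21940r⁵ - 55074r⁴ - 222512r³ + 584323r² - 215364r + 15552 is strictly positive. -/
/-! In the variable `s = r - 17/50 ∈ [0, 51/50]` the sextic has positive coefficients except
those of `s³` and `s⁴` (about `-270921.98` and `-15287.71`). These two are absorbed by the
`s²` term: `s² (328072 - 270922 s - 15288 s²)` is a lower bound for the three middle terms, and
its quadratic factor decreases on `s ≥ 0` and is still positive at `s = 51/50`. -/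

theorem stmt_5 (r : ℝ) (h1 : 0.34 ≤ r) (h2 : r < 1.36) :
    0 < 1435*r^6 + 21940*r^5 - 55074*r^4 - 222512*r^3 + 584323*r^2 - 215364*r + 15552 := by
  obtain ⟨s, rfl⟩ : ∃ s : ℝ, r = s + 17 / 50 := ⟨r - 17 / 50, by ring⟩
  have hs0 : 0 ≤ s := by norm_num at h1; linarith
  have hs1 : s ≤ 51 / 50 := by norm_num at h2; linarith
  have hmiddle : 0 ≤ 328072 - 270922 * s - 15288 * s ^ 2 := by nlinarith
  linarith [mul_nonneg (sq_nonneg s) hmiddle, pow_nonneg hs0 2, pow_nonneg hs0 3,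
    pow_nonneg hs0 4, pow_nonneg hs0 5, pow_nonneg hs0 6]
end

section
/- With a ∈ ℝ, f(x) = sin(2πx) and g(x) = sin²(2πx), one has a·∫₀¹ ((1/4)·f'(x)²·g(x)² - 2·f(x)·f'(x)·g(x)·g'(x)) dx = -15aπ²/16; in particular for a = 1 the value is -15π²/16 < 0. -/
open Real intervalIntegral

lemma d1 (x : ℝ) : HasDerivAt (fun y => Real.sin (2*Real.pi*y))
    (2*Real.pi*Real.cos (2*Real.pi*x)) x := by
  have h := (Real.hasDerivAt_sin (2*Real.pi*x)).comp x
    ((hasDerivAt_id x).const_mul (2*Real.pi))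
  simpa [Function.comp_def, mul_comm] using h

lemma dv1 (x : ℝ) : deriv (fun y => Real.sin (2*Real.pi*y)) x
    = 2*Real.pi*Real.cos (2*Real.pi*x) := (d1 x).deriv

lemma dv2 (x : ℝ) : deriv (fun y => Real.sin (2*Real.pi*y)^2) x
    = 4*Real.pi*Real.sin (2*Real.pi*x)*Real.cos (2*Real.pi*x) := by
  have h := ((d1 x).pow 2).deriv
  simp at h
  erw [h]; ring

lemma hF (x : ℝ) : HasDerivAt
    (fun y : ℝ => y/16 - Real.sin (8*Real.pi*y)/(128*Real.pi)
      - Real.sin (4*Real.pi*y)^3/(96*Real.pi))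
    (Real.sin (2*Real.pi*x)^4 * Real.cos (2*Real.pi*x)^2) x := by
  have h8 : HasDerivAt (fun y => Real.sin (8*Real.pi*y))
      (8*Real.pi*Real.cos (8*Real.pi*x)) x := by
    have h := (Real.hasDerivAt_sin (8*Real.pi*x)).comp x
      ((hasDerivAt_id x).const_mul (8*Real.pi))
    simpa [Function.comp_def, mul_comm] using h
  have h4 : HasDerivAt (fun y => Real.sin (4*Real.pi*y))
      (4*Real.pi*Real.cos (4*Real.pi*x)) x := by
    have h := (Real.hasDerivAt_sin (4*Real.pi*x)).comp x
      ((hasDerivAt_id x).const_mul (4*Real.pi))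
    simpa [Function.comp_def, mul_comm] using h
  have h4c := h4.pow 3
  have hid : HasDerivAt (fun y : ℝ => y/16 - Real.sin (8*Real.pi*y)/(128*Real.pi)
      - Real.sin (4*Real.pi*y)^3/(96*Real.pi))
      (1/16 - (8*Real.pi*Real.cos (8*Real.pi*x))/(128*Real.pi)
        - ((3:ℕ) * Real.sin (4*Real.pi*x)^(3-1) * (4*Real.pi*Real.cos (4*Real.pi*x)))/(96*Real.pi)) x := by
    exact (((hasDerivAt_id x).div_const 16).sub (h8.div_const _)).sub (h4c.div_const _)
  convert hid using 1
  have hpi : Real.pi ≠ 0 := Real.pi_ne_zero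
  have e4s : Real.sin (4*Real.pi*x) = 2 * Real.sin (2*Real.pi*x) * Real.cos (2*Real.pi*x) := by
    rw [show (4:ℝ)*Real.pi*x = 2*(2*Real.pi*x) by ring, Real.sin_two_mul]
  have e4c : Real.cos (4*Real.pi*x) = 1 - 2*Real.sin (2*Real.pi*x)^2 := by
    rw [show (4:ℝ)*Real.pi*x = 2*(2*Real.pi*x) by ring, Real.cos_two_mul']
    nlinarith [Real.sin_sq_add_cos_sq (2*Real.pi*x)]
  have e8c : Real.cos (8*Real.pi*x) = 1 - 2*Real.sin (4*Real.pi*x)^2 := by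
    rw [show (8:ℝ)*Real.pi*x = 2*(4*Real.pi*x) by ring, Real.cos_two_mul']
    nlinarith [Real.sin_sq_add_cos_sq (4*Real.pi*x)]
  have pyth : Real.sin (2*Real.pi*x)^2 + Real.cos (2*Real.pi*x)^2 = 1 :=
    Real.sin_sq_add_cos_sq _
  rw [e8c, e4s, e4c]
  field_simp
  norm_num
  nlinarith [sq_nonneg (Real.sin (2*Real.pi*x)), sq_nonneg (Real.cos (2*Real.pi*x)), pyth,
    sq_nonneg (Real.sin (2*Real.pi*x)*Real.cos (2*Real.pi*x))]

lemma key : (∫ x in (0:ℝ)..1, Real.sin (2*Real.pi*x)^4 * Real.cos (2*Real.pi*x)^2) = 1/16 := by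
  have h := intervalIntegral.integral_eq_sub_of_hasDerivAt (f := fun y : ℝ =>
      y/16 - Real.sin (8*Real.pi*y)/(128*Real.pi) - Real.sin (4*Real.pi*y)^3/(96*Real.pi))
    (fun x _ => hF x)
    (Continuous.intervalIntegrable (by continuity) 0 1)
  rw [h]
  have s8 : Real.sin (8*Real.pi) = 0 := by
    rw [show (8:ℝ)*Real.pi = (8:ℤ)*Real.pi by push_cast; ring]
    exact Real.sin_int_mul_pi 8
  have s4 : Real.sin (4*Real.pi) = 0 := by
    rw [show (4:ℝ)*Real.pi = (4:ℤ)*Real.pi by push_cast; ring]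
    exact Real.sin_int_mul_pi 4
  simp [s8, s4]

theorem stmt_8 (a : ℝ) :
    a * ∫ x in (0:ℝ)..1,
        ((1/4) * (deriv (fun y => Real.sin (2*Real.pi*y)) x)^2 * (Real.sin (2*Real.pi*x)^2)^2
          - 2 * Real.sin (2*Real.pi*x) * deriv (fun y => Real.sin (2*Real.pi*y)) x
              * Real.sin (2*Real.pi*x)^2 * deriv (fun y => Real.sin (2*Real.pi*y)^2) x)
      = -15 * a * Real.pi^2 / 16
    ∧ -15 * Real.pi^2 / 16 < 0 := by
  constructor
  · have hcongr : (∫ x in (0:ℝ)..1,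
        ((1/4) * (deriv (fun y => Real.sin (2*Real.pi*y)) x)^2 * (Real.sin (2*Real.pi*x)^2)^2
          - 2 * Real.sin (2*Real.pi*x) * deriv (fun y => Real.sin (2*Real.pi*y)) x
              * Real.sin (2*Real.pi*x)^2 * deriv (fun y => Real.sin (2*Real.pi*y)^2) x))
        = ∫ x in (0:ℝ)..1, (-15*Real.pi^2) * (Real.sin (2*Real.pi*x)^4 * Real.cos (2*Real.pi*x)^2) := by
      apply intervalIntegral.integral_congr
      intro x _
      simp only [dv1, dv2]
      ring
    rw [hcongr, intervalIntegral.integral_const_mul, key]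
    ring
  · have := Real.pi_pos
    nlinarith
end

section
/- Let p, q ∈ ℝ² with p∧q = p₁q₂ - p₂q₁ and F(x) = |x|⁴ (up to a positive constant c). If p = (10π, 0) and q = (8π, 2π) then S(p,q) = (|p∧q|²/8)·[ (1/4)(F(p)-F(q))²(1/F(p+q) + 1/F(p-q)) - (3/4)(F(p+q)+F(p-q)) + F(p) + F(q) ] is strictly positive, while if p = (2π, 0) and q = (0, 2π) then S(p,q) is strictly negative. -/
/-!
The curvature `S` is homogeneous of degree one in `c` and of degree eight in the pair of wave
vectors, so after factoring out `c (2π)⁸ > 0` both signs are read off from `S` with `c = 1` at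
the integer vectors `(5, 0), (4, 1)` and `(1, 0), (0, 1)`.
-/

/-- `F(p) = c|p|⁴` for `p ∈ ℝ²`. -/
noncomputable def Fquartic (c : ℝ) (p : ℝ × ℝ) : ℝ := c * (p.1^2 + p.2^2)^2

/-- Unnormalized sectional curvature of the exact volumorphism group of `𝕋²`
with the metric defined by `Λ = cΔ²`, in the section given by the stream
functions `cos(p·x)` and `cos(q·x)`. -/
noncomputable def Scurv (c : ℝ) (p q : ℝ × ℝ) : ℝ :=
  ((p.1 * q.2 - p.2 * q.1)^2 / 8) *
    ((1/4) * (Fquartic c p - Fquartic c q)^2 *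
        (1 / Fquartic c (p + q) + 1 / Fquartic c (p - q))
      - (3/4) * (Fquartic c (p + q) + Fquartic c (p - q))
      + Fquartic c p + Fquartic c q)

lemma Fquartic_eq_mul (c : ℝ) (p : ℝ × ℝ) : Fquartic c p = c * Fquartic 1 p := by
  simp only [Fquartic, one_mul]

lemma Fquartic_smul (c t : ℝ) (p : ℝ × ℝ) : Fquartic c (t • p) = t ^ 4 * Fquartic c p := by
  simp only [Fquartic, Prod.smul_fst, Prod.smul_snd, smul_eq_mul]
  ring

-- With `0⁻¹ = 0`, both `(a * b)⁻¹ = a⁻¹ * b⁻¹` and `c ^ 2 * c⁻¹ = c` hold for all reals, so the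
-- homogeneity identities below hold even where some `F` vanishes.
lemma Scurv_eq_mul (c : ℝ) (p q : ℝ × ℝ) : Scurv c p q = c * Scurv 1 p q := by
  have hc : c ^ 2 * c⁻¹ = c := by
    rcases eq_or_ne c 0 with rfl | hc
    · simp
    · field_simp
  simp only [Scurv, Fquartic_eq_mul c, one_div, mul_inv]
  linear_combination (p.1 * q.2 - p.2 * q.1) ^ 2 / 32 * (Fquartic 1 p - Fquartic 1 q) ^ 2 *
    ((Fquartic 1 (p + q))⁻¹ + (Fquartic 1 (p - q))⁻¹) * hc

lemma Scurv_smul (c t : ℝ) (p q : ℝ × ℝ) : Scurv c (t • p) (t • q) = t ^ 8 * Scurv c p q := by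
  have ht : (t ^ 4) ^ 2 * (t ^ 4)⁻¹ = t ^ 4 := by
    rcases eq_or_ne t 0 with rfl | ht
    · simp
    · field_simp
  simp only [Scurv, ← smul_add, ← smul_sub, Fquartic_smul, Prod.smul_fst, Prod.smul_snd,
    smul_eq_mul, one_div, mul_inv]
  linear_combination (p.1 * q.2 - p.2 * q.1) ^ 2 / 32 * t ^ 4 * (Fquartic c p - Fquartic c q) ^ 2 *
    ((Fquartic c (p + q))⁻¹ + (Fquartic c (p - q))⁻¹) * ht

lemma Scurv_smul_eq_mul (c t : ℝ) (p q : ℝ × ℝ) :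
    Scurv c (t • p) (t • q) = c * t ^ 8 * Scurv 1 p q := by
  rw [Scurv_smul, Scurv_eq_mul]
  ring

lemma Scurv_one_pos : 0 < Scurv 1 (5, 0) (4, 1) := by
  norm_num [Scurv, Fquartic]

lemma Scurv_one_neg : Scurv 1 (1, 0) (0, 1) < 0 := by
  norm_num [Scurv, Fquartic]

theorem stmt_10 (c : ℝ) (hc : 0 < c) :
    0 < Scurv c (10 * Real.pi, 0) (8 * Real.pi, 2 * Real.pi) ∧
    Scurv c (2 * Real.pi, 0) (0, 2 * Real.pi) < 0 := by
  have hscale : 0 < c * (2 * Real.pi) ^ 8 := by positivity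
  have hp : ((10 * Real.pi, 0) : ℝ × ℝ) = (2 * Real.pi) • (5, 0) := by
    ext <;> simp only [Prod.smul_mk, smul_eq_mul] <;> ring
  have hq : ((8 * Real.pi, 2 * Real.pi) : ℝ × ℝ) = (2 * Real.pi) • (4, 1) := by
    ext <;> simp only [Prod.smul_mk, smul_eq_mul] <;> ring
  have he₁ : ((2 * Real.pi, 0) : ℝ × ℝ) = (2 * Real.pi) • (1, 0) := by simp
  have he₂ : ((0, 2 * Real.pi) : ℝ × ℝ) = (2 * Real.pi) • (0, 1) := by simp
  rw [hp, hq, he₁, he₂, Scurv_smul_eq_mul, Scurv_smul_eq_mul]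
  exact ⟨mul_pos hscale Scurv_one_pos, mul_neg_of_pos_of_neg hscale Scurv_one_neg⟩
end

section
/- Let a, b > 0, A = a - b∂ₓ², and define Γ(u,v) = A⁻¹∂ₓ(a·u·v + (b/2)·u'·v') for smooth 1-periodic u, v. Then the coadjoint operator ad*_v u = A⁻¹(2a·u·v' + a·v·u' - 2b·v'·u'' - b·v·u''') satisfies the identity ad*_v u + ad*_u v = ∂ₓ(u·v) + 2Γ(u,v); in particular ad*_u u = (1/2)∂ₓ(u²) + Γ(u,u). -/
/-- Smooth 1-periodic function on `ℝ` (model for a function on `S¹`). -/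
def Per (f : ℝ → ℝ) : Prop := ContDiff ℝ (⊤ : ℕ∞) f ∧ ∀ x, f (x + 1) = f x

/-- The elliptic operator `A = a - b ∂ₓ²`. -/
noncomputable def Aop (a b : ℝ) (f : ℝ → ℝ) : ℝ → ℝ :=
  fun x => a * f x - b * deriv (deriv f) x


lemma smderiv {f : ℝ → ℝ} (h : ContDiff ℝ (⊤:ℕ∞) f) : ContDiff ℝ (⊤:ℕ∞) (deriv f) :=
  (contDiff_infty_iff_deriv.mp h).2

lemma smdiff {f : ℝ → ℝ} (h : ContDiff ℝ (⊤:ℕ∞) f) : Differentiable ℝ f :=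
  (contDiff_infty_iff_deriv.mp h).1

lemma maxpr (a b : ℝ) (ha : 0 < a) (hb : 0 < b) (f : ℝ → ℝ) (hf : ContDiff ℝ (⊤:ℕ∞) f)
    (hp : ∀ x, f (x + 1) = f x) (h0 : ∀ x, a * f x - b * deriv (deriv f) x = 0) :
    ∀ x, f x ≤ 0 := by
  obtain ⟨x₀, hx₀, hmax⟩ := (isCompact_Icc).exists_isMaxOn ⟨0, by norm_num⟩
    (hf.continuous.continuousOn (s := Set.Icc (0:ℝ) 1))
  have hper : Function.Periodic f 1 := hp
  have glob : ∀ x, f x ≤ f x₀ := by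
    intro x
    obtain ⟨y, hy, hxy⟩ := hper.exists_mem_Ico₀ one_pos x
    rw [hxy]
    exact isMaxOn_iff.mp hmax y ⟨hy.1, hy.2.le⟩
  have hloc : IsLocalMax f x₀ := Filter.Eventually.of_forall glob
  have hd1 : deriv f x₀ = 0 := hloc.deriv_eq_zero
  have hle : deriv (deriv f) x₀ ≤ 0 := by
    by_contra hpos
    push_neg at hpos
    have hc2 : Continuous (deriv (deriv f)) := (smderiv (smderiv hf)).continuous
    have hopen : IsOpen {x | 0 < deriv (deriv f) x} := isOpen_lt continuous_const hc2
    obtain ⟨δ, hδ, hball⟩ := Metric.isOpen_iff.mp hopen x₀ hpos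
    have hsub : ∀ y ∈ Set.Ioo (x₀ - δ) (x₀ + δ), 0 < deriv (deriv f) y :=
      fun y hy => hball (by rw [Real.ball_eq_Ioo]; exact hy)
    have hx₀c : x₀ < x₀ + δ/2 := by linarith
    have hm1 : StrictMonoOn (deriv f) (Set.Icc x₀ (x₀ + δ/2)) := by
      apply strictMonoOn_of_deriv_pos (convex_Icc _ _) (smderiv hf).continuous.continuousOn
      intro x hx
      rw [interior_Icc] at hx
      exact hsub x ⟨by linarith [hx.1], by linarith [hx.2]⟩
    have hm2 : StrictMonoOn f (Set.Icc x₀ (x₀ + δ/2)) := by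
      apply strictMonoOn_of_deriv_pos (convex_Icc _ _) hf.continuous.continuousOn
      intro x hx
      rw [interior_Icc] at hx
      have := hm1 (Set.left_mem_Icc.mpr hx₀c.le) ⟨hx.1.le, hx.2.le⟩ hx.1
      rwa [hd1] at this
    have : f x₀ < f (x₀ + δ/2) := hm2 (Set.left_mem_Icc.mpr hx₀c.le) (Set.right_mem_Icc.mpr hx₀c.le) hx₀c
    exact absurd (glob (x₀ + δ/2)) (not_le.mpr this)
  have key : a * f x₀ ≤ 0 := by
    have := h0 x₀
    nlinarith
  intro x
  have h1 : f x₀ ≤ 0 := by nlinarith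
  linarith [glob x]

lemma zeropr (a b : ℝ) (ha : 0 < a) (hb : 0 < b) (f : ℝ → ℝ) (hf : ContDiff ℝ (⊤:ℕ∞) f)
    (hp : ∀ x, f (x + 1) = f x) (h0 : ∀ x, a * f x - b * deriv (deriv f) x = 0) :
    ∀ x, f x = 0 := by
  have h1 := maxpr a b ha hb f hf hp h0
  have e1 : deriv (fun x => -f x) = fun x => -(deriv f x) := funext fun x => deriv.neg
  have e2 : deriv (deriv (fun x => -f x)) = fun x => -(deriv (deriv f) x) := by
    rw [e1]; exact funext fun x => deriv.neg
  have h2 := maxpr a b ha hb (fun x => -f x) hf.neg (fun x => by simp [hp x])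
    (fun x => by rw [e2]; have := h0 x; simp; linarith)
  intro x
  have := h2 x
  simp at this
  linarith [h1 x]

lemma smderiv' {f : ℝ → ℝ} (h : ContDiff ℝ (⊤:ℕ∞) f) : ContDiff ℝ (⊤:ℕ∞) (deriv f) :=
  (contDiff_infty_iff_deriv.mp h).2
lemma smdiff' {f : ℝ → ℝ} (h : ContDiff ℝ (⊤:ℕ∞) f) : Differentiable ℝ f :=
  (contDiff_infty_iff_deriv.mp h).1

lemma dmul {f g : ℝ → ℝ} (hf : ContDiff ℝ (⊤:ℕ∞) f) (hg : ContDiff ℝ (⊤:ℕ∞) g) :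
    deriv (fun y => f y * g y) = fun y => deriv f y * g y + f y * deriv g y :=
  funext fun x => deriv_mul (smdiff' hf x) (smdiff' hg x)

lemma dadd {f g : ℝ → ℝ} (hf : ContDiff ℝ (⊤:ℕ∞) f) (hg : ContDiff ℝ (⊤:ℕ∞) g) :
    deriv (fun y => f y + g y) = fun y => deriv f y + deriv g y :=
  funext fun x => deriv_add (smdiff' hf x) (smdiff' hg x)

lemma dcomb {f g h k : ℝ → ℝ} (hf : ContDiff ℝ (⊤:ℕ∞) f) (hg : ContDiff ℝ (⊤:ℕ∞) g)
    (hh : ContDiff ℝ (⊤:ℕ∞) h) (hk : ContDiff ℝ (⊤:ℕ∞) k) :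
    deriv (fun x => f x + g x - h x - 2 * k x)
      = fun x => deriv f x + deriv g x - deriv h x - 2 * deriv k x := by
  funext x
  rw [deriv_fun_sub (by exact (((smdiff' hf x).add (smdiff' hg x)).sub (smdiff' hh x)))
        ((smdiff' hk x).const_mul 2),
      deriv_fun_sub (f := fun y => f y + g y) ((smdiff' hf x).add (smdiff' hg x)) (smdiff' hh x),
      deriv_fun_add (smdiff' hf x) (smdiff' hg x), deriv_const_mul 2 (smdiff' hk x)]

lemma dsub' {f g : ℝ → ℝ} (hf : ContDiff ℝ (⊤:ℕ∞) f) (hg : ContDiff ℝ (⊤:ℕ∞) g) :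
    deriv (fun y => f y - g y) = fun y => deriv f y - deriv g y :=
  funext fun x => deriv_sub (smdiff' hf x) (smdiff' hg x)

lemma dper {f : ℝ → ℝ} (hp : ∀ x, f (x + 1) = f x) : ∀ x, deriv f (x + 1) = deriv f x := by
  intro x
  have h : (fun y => f (y + 1)) = f := funext hp
  calc deriv f (x + 1) = deriv (fun y => f (y + 1)) x := (deriv_comp_add_const f 1 x).symm
    _ = deriv f x := by rw [h]

theorem stmt_11 (a b : ℝ) (ha : 0 < a) (hb : 0 < b)
    (u v Γuv adsvu adsuv : ℝ → ℝ)
    (hu : Per u) (hv : Per v) (hΓ : Per Γuv) (h1 : Per adsvu) (h2 : Per adsuv)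
    -- Γ(u,v) = A⁻¹ ∂ₓ(a u v + (b/2) u' v')
    (hΓdef : ∀ x, Aop a b Γuv x =
      deriv (fun y => a * u y * v y + (b/2) * deriv u y * deriv v y) x)
    -- ad*_v u = A⁻¹(2a u v' + a v u' - 2b v' u'' - b v u''')
    (hvu : ∀ x, Aop a b adsvu x =
      2*a * u x * deriv v x + a * v x * deriv u x
        - 2*b * deriv v x * deriv (deriv u) x - b * v x * deriv (deriv (deriv u)) x)
    -- ad*_u v = A⁻¹(2a v u' + a u v' - 2b u' v'' - b u v''')
    (huv : ∀ x, Aop a b adsuv x =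
      2*a * v x * deriv u x + a * u x * deriv v x
        - 2*b * deriv u x * deriv (deriv v) x - b * u x * deriv (deriv (deriv v)) x) :
    (∀ x, adsvu x + adsuv x = deriv (fun y => u y * v y) x + 2 * Γuv x) ∧
    (v = u → ∀ x, adsvu x = (1/2) * deriv (fun y => u y ^ 2) x + Γuv x) := by
  have hU : ContDiff ℝ (⊤:ℕ∞) u := hu.1.of_le (by simp)
  have hV : ContDiff ℝ (⊤:ℕ∞) v := hv.1.of_le (by simp)
  have hG : ContDiff ℝ (⊤:ℕ∞) Γuv := hΓ.1.of_le (by simp)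
  have hA1 : ContDiff ℝ (⊤:ℕ∞) adsvu := h1.1.of_le (by simp)
  have hA2 : ContDiff ℝ (⊤:ℕ∞) adsuv := h2.1.of_le (by simp)
  have hU1 := smderiv' hU
  have hU2 := smderiv' hU1
  have hV1 := smderiv' hV
  have hV2 := smderiv' hV1
  -- derivatives of the product u*v
  have e1 : deriv (fun y => u y * v y) = fun y => deriv u y * v y + u y * deriv v y :=
    dmul hU hV
  have e2 : deriv (deriv (fun y => u y * v y)) =
      fun x => (deriv (deriv u) x * v x + deriv u x * deriv v x)
        + (deriv u x * deriv v x + u x * deriv (deriv v) x) := by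
    rw [e1]
    funext x
    rw [deriv_fun_add (smdiff' (hU1.mul hV) x) (smdiff' (hU.mul hV1) x),
        deriv_fun_mul (smdiff' hU1 x) (smdiff' hV x), deriv_fun_mul (smdiff' hU x) (smdiff' hV1 x)]
  have e3 : deriv (deriv (deriv (fun y => u y * v y))) =
      fun x => deriv (deriv (deriv u)) x * v x + 3 * deriv (deriv u) x * deriv v x
        + 3 * deriv u x * deriv (deriv v) x + u x * deriv (deriv (deriv v)) x := by
    rw [e2]
    funext x
    rw [deriv_fun_add (smdiff' ((hU2.mul hV).add (hU1.mul hV1)) x)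
          (smdiff' ((hU1.mul hV1).add (hU.mul hV2)) x),
        deriv_fun_add (smdiff' (hU2.mul hV) x) (smdiff' (hU1.mul hV1) x),
        deriv_fun_add (smdiff' (hU1.mul hV1) x) (smdiff' (hU.mul hV2) x),
        deriv_fun_mul (smdiff' hU2 x) (smdiff' hV x), deriv_fun_mul (smdiff' hU1 x) (smdiff' hV1 x),
        deriv_fun_mul (smdiff' hU x) (smdiff' hV2 x)]
    ring
  -- derivative of the Γ-source
  have dQ : ∀ x, deriv (fun y => a * u y * v y + (b/2) * deriv u y * deriv v y) x =
      a * (deriv u x * v x + u x * deriv v x)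
        + (b/2) * (deriv (deriv u) x * deriv v x + deriv u x * deriv (deriv v) x) := by
    intro x
    rw [deriv_fun_add (f := fun y => a * u y * v y) (g := fun y => b / 2 * deriv u y * deriv v y) (((smdiff' hU x).const_mul a).mul (smdiff' hV x))
          (((smdiff' hU1 x).const_mul (b/2)).mul (smdiff' hV1 x)),
        deriv_fun_mul ((smdiff' hU x).const_mul a) (smdiff' hV x),
        deriv_fun_mul ((smdiff' hU1 x).const_mul (b/2)) (smdiff' hV1 x),
        deriv_const_mul a (smdiff' hU x), deriv_const_mul (b/2) (smdiff' hU1 x)]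
    ring
  have hDP : ContDiff ℝ (⊤:ℕ∞) (deriv (fun y => u y * v y)) := smderiv' (hU.mul hV)
  -- the function W := ad*_v u + ad*_u v - (uv)' - 2Γ
  have hw1 : deriv (fun x => adsvu x + adsuv x - deriv (fun y => u y * v y) x - 2 * Γuv x)
      = fun x => deriv adsvu x + deriv adsuv x
          - deriv (deriv (fun y => u y * v y)) x - 2 * deriv Γuv x :=
    dcomb hA1 hA2 hDP hG
  have hw2 : deriv (deriv (fun x => adsvu x + adsuv x
        - deriv (fun y => u y * v y) x - 2 * Γuv x))
      = fun x => deriv (deriv adsvu) x + deriv (deriv adsuv) x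
          - deriv (deriv (deriv (fun y => u y * v y))) x - 2 * deriv (deriv Γuv) x := by
    rw [hw1]
    exact dcomb (smderiv' hA1) (smderiv' hA2) (smderiv' hDP) (smderiv' hG)
  have hWsm : ContDiff ℝ (⊤:ℕ∞)
      (fun x => adsvu x + adsuv x - deriv (fun y => u y * v y) x - 2 * Γuv x) :=
    ((hA1.add hA2).sub hDP).sub (contDiff_const.mul hG)
  have hPper : ∀ x, u (x+1) * v (x+1) = u x * v x := fun x => by rw [hu.2 x, hv.2 x]
  have hWper : ∀ x, (fun x => adsvu x + adsuv x - deriv (fun y => u y * v y) x - 2 * Γuv x) (x+1)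
      = (fun x => adsvu x + adsuv x - deriv (fun y => u y * v y) x - 2 * Γuv x) x := by
    intro x
    simp only
    rw [h1.2 x, h2.2 x, hΓ.2 x, dper hPper x]
  have hW0 : ∀ x, a * (fun x => adsvu x + adsuv x
        - deriv (fun y => u y * v y) x - 2 * Γuv x) x
      - b * deriv (deriv (fun x => adsvu x + adsuv x
        - deriv (fun y => u y * v y) x - 2 * Γuv x)) x = 0 := by
    intro x
    rw [hw2]
    have H1 := hvu x
    have H2 := huv x
    have H3 := hΓdef x
    simp only [Aop] at H1 H2 H3
    rw [dQ x] at H3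
    simp only [e3]
    simp only [e1]
    linear_combination H1 + H2 - 2 * H3
  have key := zeropr a b ha hb _ hWsm hWper hW0
  have part1 : ∀ x, adsvu x + adsuv x = deriv (fun y => u y * v y) x + 2 * Γuv x := by
    intro x
    have hx := key x
    try simp only at hx
    linarith
  refine ⟨part1, ?_⟩
  intro hveq
  subst hveq
  -- now v = u (v has been substituted)
  have hz1 : deriv (fun x => adsvu x - adsuv x) = fun x => deriv adsvu x - deriv adsuv x :=
    dsub' hA1 hA2
  have hz2 : deriv (deriv (fun x => adsvu x - adsuv x))
      = fun x => deriv (deriv adsvu) x - deriv (deriv adsuv) x := by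
    rw [hz1]; exact dsub' (smderiv' hA1) (smderiv' hA2)
  have hZ0 : ∀ x, a * (fun x => adsvu x - adsuv x) x
      - b * deriv (deriv (fun x => adsvu x - adsuv x)) x = 0 := by
    intro x
    rw [hz2]
    have H1 := hvu x
    have H2 := huv x
    simp only [Aop] at H1 H2
    simp only
    linear_combination H1 - H2
  have hZper : ∀ x, (fun x => adsvu x - adsuv x) (x+1) = (fun x => adsvu x - adsuv x) x := by
    intro x; simp only; rw [h1.2 x, h2.2 x]
  have keyz := zeropr a b ha hb _ (hA1.sub hA2) hZper hZ0
  intro x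
  have hx1 := part1 x
  have hx2 := keyz x
  try simp only at hx2
  have hpow : deriv (fun y => v y ^ 2) x = deriv (fun y => v y * v y) x := by
    congr 1
    funext y
    ring
  rw [hpow]
  linarith
end

section
/- Let a, b > 0, A = a - b∂ₓ², Γ(u,v) = A⁻¹∂ₓ(q) and T(u,v) = A⁻¹q with q = a·u·v + (b/2)·u'·v'. Then ⟨⟨Γ(u,v), Γ(u,v)⟩⟩_{H¹} = (1/b)∫₀¹ q² dx - (a/b)⟨⟨T(u,v), T(u,v)⟩⟩_{H¹}, where ⟨⟨f,g⟩⟩_{H¹} = ∫₀¹(a·fg + b·f'g')dx. -/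
/-- The `H¹` a-b inner product `⟨⟨f,g⟩⟩ = ∫₀¹ (a f g + b f' g') dx`. -/
noncomputable def H1inner (a b : ℝ) (f g : ℝ → ℝ) : ℝ :=
  ∫ x in (0:ℝ)..1, (a * f x * g x + b * deriv f x * deriv g x)


lemma Per.cont {f : ℝ → ℝ} (hf : Per f) : Continuous f := hf.1.continuous

lemma Per.diff {f : ℝ → ℝ} (hf : Per f) : Differentiable ℝ f :=
  hf.1.differentiable (by simp)

lemma Per.derivP {f : ℝ → ℝ} (hf : Per f) : Per (deriv f) := by
  constructor
  · have h' : ContDiff ℝ (((⊤ : ℕ∞) : WithTop ℕ∞) + 1) f := by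
      rw [show (((⊤ : ℕ∞) : WithTop ℕ∞) + 1) = ((⊤ : ℕ∞) : WithTop ℕ∞) from rfl]; exact hf.1
    exact (contDiff_succ_iff_deriv.mp h').2.2
  · intro x
    have hfun : (fun y => f (y + 1)) = f := funext hf.2
    calc deriv f (x + 1) = deriv (fun y => f (y + 1)) x := (deriv_comp_add_const ..).symm
    _ = deriv f x := by rw [hfun]

lemma ibp {f g : ℝ → ℝ} (hf : Per f) (hg : Per g) :
    ∫ x in (0:ℝ)..1, (deriv f x * g x + f x * deriv g x) = 0 := by
  have h := intervalIntegral.integral_deriv_mul_eq_sub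
    (u := f) (v := g) (u' := deriv f) (v' := deriv g) (a := 0) (b := 1)
    (fun x _ => (hf.diff x).hasDerivAt)
    (fun x _ => (hg.diff x).hasDerivAt)
    (hf.derivP.cont.intervalIntegrable _ _)
    (hg.derivP.cont.intervalIntegrable _ _)
  rw [h]
  have h1 : f 1 = f 0 := by simpa using hf.2 0
  have h2 : g 1 = g 0 := by simpa using hg.2 0
  rw [h1, h2]; ring

/-- self-adjoint form: ∫ (A f) g = ⟨⟨f,g⟩⟩ -/
lemma Aop_inner {a b : ℝ} {f g : ℝ → ℝ} (hf : Per f) (hg : Per g) :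
    (∫ x in (0:ℝ)..1, Aop a b f x * g x) = H1inner a b f g := by
  have key : ∫ x in (0:ℝ)..1,
      (deriv (deriv f) x * g x + deriv f x * deriv g x) = 0 := ibp hf.derivP hg
  have hint1 : IntervalIntegrable (fun x => a * f x * g x + b * deriv f x * deriv g x)
      MeasureTheory.volume (0:ℝ) 1 := by
    apply Continuous.intervalIntegrable
    exact ((continuous_const.mul hf.cont).mul hg.cont).add
      ((continuous_const.mul hf.derivP.cont).mul hg.derivP.cont)
  have hint2 : IntervalIntegrable (fun x => deriv (deriv f) x * g x + deriv f x * deriv g x)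
      MeasureTheory.volume (0:ℝ) 1 := by
    apply Continuous.intervalIntegrable
    exact (hf.derivP.derivP.cont.mul hg.cont).add (hf.derivP.cont.mul hg.derivP.cont)
  have hptwise : ∀ x, Aop a b f x * g x =
      (a * f x * g x + b * deriv f x * deriv g x)
        - b * (deriv (deriv f) x * g x + deriv f x * deriv g x) := by
    intro x; simp only [Aop]; ring
  calc (∫ x in (0:ℝ)..1, Aop a b f x * g x)
      = ∫ x in (0:ℝ)..1, ((a * f x * g x + b * deriv f x * deriv g x)
          - b * (deriv (deriv f) x * g x + deriv f x * deriv g x)) := by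
        exact intervalIntegral.integral_congr (fun x _ => hptwise x)
    _ = (∫ x in (0:ℝ)..1, (a * f x * g x + b * deriv f x * deriv g x))
          - b * ∫ x in (0:ℝ)..1, (deriv (deriv f) x * g x + deriv f x * deriv g x) := by
        rw [intervalIntegral.integral_sub hint1 (hint2.const_mul b),
          intervalIntegral.integral_const_mul]
    _ = H1inner a b f g := by rw [key, H1inner]; ring

theorem stmt_12 (a b : ℝ) (ha : 0 < a) (hb : 0 < b)
    (u v q Γ T : ℝ → ℝ)
    (hu : Per u) (hv : Per v) (hΓ : Per Γ) (hT : Per T)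
    (hq : ∀ x, q x = a * u x * v x + (b/2) * deriv u x * deriv v x)
    -- Γ(u,v) = A⁻¹ ∂ₓ q
    (hΓdef : ∀ x, Aop a b Γ x = deriv q x)
    -- T(u,v) = A⁻¹ q
    (hTdef : ∀ x, Aop a b T x = q x) :
    H1inner a b Γ Γ = (1/b) * (∫ x in (0:ℝ)..1, (q x)^2) - (a/b) * H1inner a b T T := by
  have hbne : b ≠ 0 := ne_of_gt hb
  -- q is smooth and periodic
  have hqfun : q = fun x => a * T x - b * deriv (deriv T) x := by
    funext x; rw [← hTdef x]; rfl
  have hqP : Per q := by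
    rw [hqfun]
    refine ⟨(contDiff_const.mul hT.1).sub (contDiff_const.mul hT.derivP.derivP.1), ?_⟩
    intro x
    show a * T (x+1) - b * deriv (deriv T) (x+1) = a * T x - b * deriv (deriv T) x
    rw [hT.2, hT.derivP.derivP.2]
  -- deriv q = Aop a b (deriv T)
  have hderivq : ∀ x, deriv q x = Aop a b (deriv T) x := by
    intro x
    rw [hqfun]
    rw [deriv_fun_sub ((hT.diff x).const_mul a) ((hT.derivP.derivP.diff x).const_mul b),
      deriv_const_mul a (hT.diff x), deriv_const_mul b (hT.derivP.derivP.diff x)]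
    rfl
  -- T'' = (a T - q)/b
  have hT'' : ∀ x, deriv (deriv T) x = (a * T x - q x) / b := by
    intro x
    have := hTdef x
    simp only [Aop] at this
    field_simp
    linarith
  -- main chain
  have step1 : H1inner a b Γ Γ = ∫ x in (0:ℝ)..1, deriv q x * Γ x := by
    rw [← Aop_inner hΓ hΓ]
    exact intervalIntegral.integral_congr (fun x _ => by rw [hΓdef x])
  have step2 : (∫ x in (0:ℝ)..1, deriv q x * Γ x) = H1inner a b (deriv T) Γ := by
    rw [← Aop_inner hT.derivP hΓ]
    exact intervalIntegral.integral_congr (fun x _ => by rw [hderivq x])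
  have step3 : H1inner a b (deriv T) Γ = H1inner a b Γ (deriv T) := by
    unfold H1inner
    exact intervalIntegral.integral_congr (fun x _ => by ring)
  have step4 : H1inner a b Γ (deriv T) = ∫ x in (0:ℝ)..1, deriv q x * deriv T x := by
    rw [← Aop_inner hΓ hT.derivP]
    exact intervalIntegral.integral_congr (fun x _ => by rw [hΓdef x])
  -- ibp : ∫ q' T' = - ∫ q T''
  have hint3 : IntervalIntegrable (fun x => deriv q x * deriv T x)
      MeasureTheory.volume (0:ℝ) 1 :=
    (hqP.derivP.cont.mul hT.derivP.cont).intervalIntegrable _ _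
  have hint4 : IntervalIntegrable (fun x => q x * deriv (deriv T) x)
      MeasureTheory.volume (0:ℝ) 1 :=
    (hqP.cont.mul hT.derivP.derivP.cont).intervalIntegrable _ _
  have hibp := ibp hqP hT.derivP
  have step5 : (∫ x in (0:ℝ)..1, deriv q x * deriv T x)
      = - ∫ x in (0:ℝ)..1, q x * deriv (deriv T) x := by
    have := intervalIntegral.integral_add hint3 hint4
    rw [hibp] at this
    linarith [this.symm]
  have hint5 : IntervalIntegrable (fun x => (q x)^2) MeasureTheory.volume (0:ℝ) 1 :=
    (hqP.cont.pow 2).intervalIntegrable _ _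
  have hint6 : IntervalIntegrable (fun x => q x * T x) MeasureTheory.volume (0:ℝ) 1 :=
    (hqP.cont.mul hT.cont).intervalIntegrable _ _
  have step6 : (- ∫ x in (0:ℝ)..1, q x * deriv (deriv T) x)
      = (1/b) * (∫ x in (0:ℝ)..1, (q x)^2) - (a/b) * ∫ x in (0:ℝ)..1, q x * T x := by
    have hcong : (∫ x in (0:ℝ)..1, q x * deriv (deriv T) x)
        = ∫ x in (0:ℝ)..1, ((a/b) * (q x * T x) - (1/b) * (q x)^2) := by
      refine intervalIntegral.integral_congr (fun x _ => ?_)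
      rw [hT'' x]; field_simp
    rw [hcong, intervalIntegral.integral_sub (hint6.const_mul _) (hint5.const_mul _),
      intervalIntegral.integral_const_mul, intervalIntegral.integral_const_mul]
    ring
  have step7 : H1inner a b T T = ∫ x in (0:ℝ)..1, q x * T x := by
    rw [← Aop_inner hT hT]
    exact intervalIntegral.integral_congr (fun x _ => by rw [hTdef x])
  rw [step1, step2, step3, step4, step5, step6, step7]
end

section
/- Consider the linear ODE system z¹' = ((λ₂-λ₃)/λ₁)·z³, z²' = 0, z³' = ((λ₁-λ₂)/λ₃)·z¹ with constants 0 < λ₁ < λ₂ < λ₃. Then the coefficient matrix has a positive real eigenvalue, and the system admits a solution whose norm grows exponentially in time. -/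
/-!
Both off-diagonal coefficients `a = (λ₂ - λ₃)/λ₁` and `b = (λ₁ - λ₂)/λ₃` are negative, so
`ν = √(ab)` is a positive real number with `ν² = ab`, and `(a, 0, ν)` is an eigenvector of the
coefficient matrix for `ν`. Along an eigenvector `v` for `ν` the flow is `t ↦ e^{νt} v`, whose
norm is exactly `e^{νt} ‖v‖`.
-/

open Module.End

section EigenvectorSolution

variable {E : Type*} [NormedAddCommGroup E] [NormedSpace ℝ E]

theorem hasDerivAt_exp_smul_of_apply_eq_smul {f : E →ₗ[ℝ] E} {ν : ℝ} {v : E}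
    (hv : f v = ν • v) (t : ℝ) :
    HasDerivAt (fun t => Real.exp (ν * t) • v) (f (Real.exp (ν * t) • v)) t := by
  have hexp : HasDerivAt (fun t => Real.exp (ν * t)) (Real.exp (ν * t) * ν) t := by
    simpa using ((hasDerivAt_id t).const_mul ν).exp
  rw [map_smul, hv, smul_smul]
  exact hexp.smul_const v

theorem exists_solution_norm_eq_exp_of_hasEigenvector {f : Module.End ℝ E} {ν : ℝ} {v : E}
    (hv : HasEigenvector f ν v) :
    ∃ z : ℝ → E, (∀ t, HasDerivAt z (f (z t)) t) ∧
      ∃ C : ℝ, 0 < C ∧ ∀ t, ‖z t‖ = C * Real.exp (ν * t) := by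
  refine ⟨fun t => Real.exp (ν * t) • v,
    hasDerivAt_exp_smul_of_apply_eq_smul hv.apply_eq_smul, ‖v‖, norm_pos_iff.mpr hv.2,
    fun t => ?_⟩
  rw [norm_smul, Real.norm_of_nonneg (Real.exp_pos _).le, mul_comm]

end EigenvectorSolution

theorem hasEigenvector_toLin'_of_sq_eq_mul {a b ν : ℝ} (hν : ν ^ 2 = a * b) (hν0 : ν ≠ 0) :
    HasEigenvector (Matrix.toLin' !![0, 0, a; 0, 0, 0; b, 0, 0]) ν ![a, 0, ν] := by
  refine ⟨mem_eigenspace_iff.mpr ?_, fun h => hν0 (congrFun h 2)⟩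
  calc Matrix.toLin' !![0, 0, a; 0, 0, 0; b, 0, 0] ![a, 0, ν] = ![a * ν, 0, a * b] := by
        ext i; fin_cases i <;> simp [Matrix.vecHead, Matrix.vecTail, mul_comm]
    _ = ν • ![a, 0, ν] := by
        rw [← hν]; ext i; fin_cases i <;> simp [sq, mul_comm]

theorem stmt_15 (l1 l2 l3 : ℝ) (h1 : 0 < l1) (h12 : l1 < l2) (h23 : l2 < l3) :
    let M : Matrix (Fin 3) (Fin 3) ℝ :=
      !![0, 0, (l2 - l3)/l1;
         0, 0, 0;
         (l1 - l2)/l3, 0, 0]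
    ∃ ν : ℝ, 0 < ν ∧ Module.End.HasEigenvalue (Matrix.toLin' M) ν ∧
      ∃ z : ℝ → Fin 3 → ℝ,
        (∀ t, HasDerivAt z (M.mulVec (z t)) t) ∧
        ∃ C : ℝ, 0 < C ∧ ∀ t : ℝ, 0 ≤ t → C * Real.exp (ν * t) ≤ ‖z t‖ := by
  intro M
  have ha : (l2 - l3) / l1 < 0 := div_neg_of_neg_of_pos (by linarith) h1
  have hb : (l1 - l2) / l3 < 0 := div_neg_of_neg_of_pos (by linarith) (by linarith)
  have hab : 0 < (l2 - l3) / l1 * ((l1 - l2) / l3) := mul_pos_of_neg_of_neg ha hb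
  set ν := √((l2 - l3) / l1 * ((l1 - l2) / l3))
  have hν : 0 < ν := Real.sqrt_pos.mpr hab
  have hv := hasEigenvector_toLin'_of_sq_eq_mul (Real.sq_sqrt hab.le) hν.ne'
  obtain ⟨z, hz, C, hC, hzC⟩ := exists_solution_norm_eq_exp_of_hasEigenvector hv
  exact ⟨ν, hν, hasEigenvalue_of_hasEigenvector hv, z, hz, C, hC, fun t _ => (hzC t).ge⟩
end

section
/- On the semidirect product Lie algebra Vect(S¹) ⋉ C^∞(S¹) with bracket ad_{(u,f)}(v,g) = (-u·v' + u'·v, v·f' - u·g'), the adjoint of ad with respect to the inner product ⟨⟨(u,f),(v,g)⟩⟩ = ∫₀¹(a·uv + b·fg)dx is given by ad*_{(u,f)}(v,g) = (2u'·v + u·v' + (b/a)·g·f', g·u' + g'·u); i.e. ⟨⟨ad*_{(u,f)}(v,g), (w,h)⟩⟩ = ⟨⟨(v,g), ad_{(u,f)}(w,h)⟩⟩ for all smooth 1-periodic (w,h). -/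
/-- The `L²` inner product `⟨⟨(u,f),(v,g)⟩⟩ = ∫₀¹ (a u v + b f g) dx`
on the semidirect product algebra `Vect(S¹) ⋉ C^∞(S¹)`. -/
noncomputable def sdInner (a b : ℝ) (p q : (ℝ → ℝ) × (ℝ → ℝ)) : ℝ :=
  ∫ x in (0:ℝ)..1, (a * p.1 x * q.1 x + b * p.2 x * q.2 x)

/-- The adjoint action `ad_{(u,f)}(v,g) = (-u v' + u' v, v f' - u g')`. -/
noncomputable def sdAd (p q : (ℝ → ℝ) × (ℝ → ℝ)) : (ℝ → ℝ) × (ℝ → ℝ) :=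
  (fun x => -p.1 x * deriv q.1 x + deriv p.1 x * q.1 x,
   fun x => q.1 x * deriv p.2 x - p.1 x * deriv q.2 x)

theorem stmt_16 (a b : ℝ) (ha : 0 < a) (hb : 0 < b)
    (u f v g : ℝ → ℝ) (hu : Per u) (hf : Per f) (hv : Per v) (hg : Per g) :
    ∀ w h : ℝ → ℝ, Per w → Per h →
      sdInner a b
        (fun x => 2 * deriv u x * v x + u x * deriv v x + (b/a) * g x * deriv f x,
         fun x => g x * deriv u x + deriv g x * u x)
        (w, h)
      = sdInner a b (v, g) (sdAd (u, f) (w, h)) := by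
  intro w h hw hh
  have hd : ∀ p : ℝ → ℝ, Per p → ∀ x : ℝ, HasDerivAt p (deriv p x) x := fun p hp x =>
    ((hp.1.differentiable (by simp)) x).hasDerivAt
  have hcd : ∀ p : ℝ → ℝ, Per p → Continuous (deriv p) := fun p hp =>
    hp.1.continuous_deriv (by simp)
  set F : ℝ → ℝ := fun x => a * u x * v x * w x + b * g x * u x * h x with hFdef
  set F' : ℝ → ℝ := fun x =>
    a * (deriv u x * v x * w x + u x * deriv v x * w x + u x * v x * deriv w x) +
    b * (deriv g x * u x * h x + g x * deriv u x * h x + g x * u x * deriv h x) with hF'def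
  have hFd : ∀ x : ℝ, HasDerivAt F (F' x) x := by
    intro x
    have h1 := ((((hd u hu x).const_mul a).mul (hd v hv x)).mul (hd w hw x)).add
      ((((hd g hg x).const_mul b).mul (hd u hu x)).mul (hd h hh x))
    convert h1 using 1
    all_goals first | rfl | (simp only [hF'def, Pi.mul_apply]; ring)
  have hF'cont : Continuous F' := by
    apply Continuous.add <;> apply Continuous.mul continuous_const
    · exact ((((hcd u hu).mul hv.1.continuous).mul hw.1.continuous).add
        (((hu.1.continuous.mul (hcd v hv)).mul hw.1.continuous))).add
          (((hu.1.continuous.mul hv.1.continuous).mul (hcd w hw)))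
    · exact ((((hcd g hg).mul hu.1.continuous).mul hh.1.continuous).add
        (((hg.1.continuous.mul (hcd u hu)).mul hh.1.continuous))).add
          (((hg.1.continuous.mul hu.1.continuous).mul (hcd h hh)))
  have key : ∀ x : ℝ,
      (a * (2 * deriv u x * v x + u x * deriv v x + (b/a) * g x * deriv f x) * w x +
        b * (g x * deriv u x + deriv g x * u x) * h x)
      = (a * v x * (-u x * deriv w x + deriv u x * w x) +
          b * g x * (w x * deriv f x - u x * deriv h x)) + F' x := by
    intro x
    simp only [hF'def]
    field_simp
    ring
  have hRHScont : Continuous (fun x =>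
      a * v x * (-u x * deriv w x + deriv u x * w x) +
        b * g x * (w x * deriv f x - u x * deriv h x)) := by
    apply Continuous.add
    · exact (continuous_const.mul hv.1.continuous).mul
        (((hu.1.continuous.neg.mul (hcd w hw))).add ((hcd u hu).mul hw.1.continuous))
    · exact (continuous_const.mul hg.1.continuous).mul
        ((hw.1.continuous.mul (hcd f hf)).sub (hu.1.continuous.mul (hcd h hh)))
  have hintF' : ∫ x in (0:ℝ)..1, F' x = F 1 - F 0 :=
    intervalIntegral.integral_eq_sub_of_hasDerivAt (fun x _ => hFd x)
      (hF'cont.intervalIntegrable 0 1)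
  have hF10 : F 1 - F 0 = 0 := by
    simp only [hFdef]
    have h1 : u 1 = u 0 := by simpa using hu.2 0
    have h2 : v 1 = v 0 := by simpa using hv.2 0
    have h3 : w 1 = w 0 := by simpa using hw.2 0
    have h4 : g 1 = g 0 := by simpa using hg.2 0
    have h5 : h 1 = h 0 := by simpa using hh.2 0
    rw [h1, h2, h3, h4, h5]; ring
  simp only [sdInner, sdAd]
  rw [intervalIntegral.integral_congr (g := fun x =>
      (a * v x * (-u x * deriv w x + deriv u x * w x) +
        b * g x * (w x * deriv f x - u x * deriv h x)) + F' x)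
      (fun x _ => key x)]
  rw [intervalIntegral.integral_add (hRHScont.intervalIntegrable 0 1)
      (hF'cont.intervalIntegrable 0 1), hintF', hF10, add_zero]
end
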